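/- arXiv:1303.6665 — 2 statements merged into one kernel-verified Lean document; each statement's English description precedes it below -/
import Mathlib

section
/- Let γ₀ be a symmetric positive definite n×n real matrix (n ≥ 2). Let Z₁ = γ₀^{-1/2}·(Σⱼ tⱼ eⱼ⊗eⱼ)·γ₀^{-1/2} with t₁,…,tₙ pairwise distinct reals, Z₂ = γ₀^{-1/2}·(Σ_{j=1}^{n-1}(eⱼ⊗e_{j+1}+e_{j+1}⊗eⱼ))·γ₀^{-1/2}, and H = γ₀. If a symmetric matrix A satisfies that both A·Z₁·Hᵀ and A·Z₂·Hᵀ are symmetric, then A is a scalar multiple of γ₀. -/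
/-!
Write `A = g B g` with `B = g⁻¹ A g⁻¹`. Since `H = g g`, the matrix `A (g⁻¹ M g⁻¹) Hᵀ` equals
`g (B M) g`, so for symmetric `M` it is symmetric exactly when `B` commutes with `M`. Commuting with
a diagonal matrix with distinct entries forces `B` to be diagonal, and a diagonal matrix commuting
with the adjacency matrix of the (connected) path graph has equal entries along every edge, hence
is scalar.
-/

open Matrix

theorem SimpleGraph.Reachable.eq_of_forall_adj_eq {V α : Type*} {G : SimpleGraph V} {f : V → α}
    {u v : V} (h : G.Reachable u v) (hf : ∀ x y, G.Adj x y → f x = f y) : f u = f v := by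
  rw [SimpleGraph.reachable_iff_reflTransGen] at h
  induction h with
  | refl => rfl
  | tail _ hadj ih => exact ih.trans (hf _ _ hadj)

namespace Matrix

variable {n R : Type*} [Fintype n]

theorem IsSymm.isSymm_mul_iff_commute [CommSemiring R] {B M : Matrix n n R} (hB : B.IsSymm)
    (hM : M.IsSymm) : (B * M).IsSymm ↔ Commute B M := by
  rw [IsSymm, transpose_mul, hB.eq, hM.eq]
  exact eq_comm

variable [DecidableEq n]

theorem isDiag_of_commute_diagonal [CommRing R] [NoZeroDivisors R] {B : Matrix n n R}
    {t : n → R} (ht : Function.Injective t) (h : Commute B (diagonal t)) : B.IsDiag := by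
  intro i j hij
  have hentry := congrFun₂ h.eq i j
  rw [mul_diagonal, diagonal_mul] at hentry
  have hprod : (t j - t i) * B i j = 0 := by linear_combination hentry
  exact (mul_eq_zero.mp hprod).resolve_left (sub_ne_zero.mpr (ht.ne (Ne.symm hij)))

theorem _root_.SimpleGraph.eq_of_adj_of_commute_diagonal_adjMatrix [Semiring R]
    (G : SimpleGraph n) [DecidableRel G.Adj] {d : n → R}
    (h : Commute (diagonal d) (G.adjMatrix R)) {i j : n} (hij : G.Adj i j) : d i = d j := by
  have hentry := congrFun₂ h.eq i j
  rwa [diagonal_mul, mul_diagonal, SimpleGraph.adjMatrix_apply, if_pos hij, mul_one,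
    one_mul] at hentry

theorem eq_smul_one_of_commute_diagonal_of_commute_adjMatrix [CommRing R] [NoZeroDivisors R]
    {G : SimpleGraph n} [DecidableRel G.Adj] (hG : G.Preconnected) {B : Matrix n n R}
    {t : n → R} (ht : Function.Injective t) (h₁ : Commute B (diagonal t))
    (h₂ : Commute B (G.adjMatrix R)) : ∃ c : R, B = c • 1 := by
  have hB := (isDiag_of_commute_diagonal ht h₁).diagonal_diag
  rw [← hB] at h₂
  have hconst (i j : n) : B.diag i = B.diag j :=
    (hG i j).eq_of_forall_adj_eq fun _ _ hxy =>
      G.eq_of_adj_of_commute_diagonal_adjMatrix h₂ hxy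
  rcases isEmpty_or_nonempty n with hn | ⟨⟨v⟩⟩
  · exact ⟨0, Subsingleton.elim _ _⟩
  · refine ⟨B v v, ?_⟩
    rw [smul_one_eq_diagonal]
    exact hB.symm.trans (congrArg diagonal (funext fun i => hconst i v))

theorem isSymm_mul_mul_iff [CommRing R] {g X : Matrix n n R} (hg : g.IsSymm)
    (hdet : IsUnit g.det) : (g * X * g).IsSymm ↔ X.IsSymm := by
  refine ⟨fun h => show Xᵀ = X from ?_, fun h => by simp [IsSymm, transpose_mul, hg.eq, h.eq, Matrix.mul_assoc]⟩
  have hconj := congrArg (fun Y => g⁻¹ * Y * g⁻¹) h.eq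
  simpa [transpose_mul, hg.eq, Matrix.mul_assoc, nonsing_inv_mul_cancel_left _ _ hdet,
    mul_nonsing_inv _ hdet] using hconj

theorem commute_conj_of_isSymm_mul_conj [CommRing R] {g A M : Matrix n n R} (hg : g.IsSymm)
    (hdet : IsUnit g.det) (hA : A.IsSymm) (hM : M.IsSymm)
    (h : (A * (g⁻¹ * M * g⁻¹) * (g * g)ᵀ).IsSymm) : Commute (g⁻¹ * A * g⁻¹) M := by
  have hB : (g⁻¹ * A * g⁻¹).IsSymm := by
    simp [IsSymm, transpose_mul, hg.inv.eq, hA.eq, Matrix.mul_assoc]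
  have hrw : A * (g⁻¹ * M * g⁻¹) * (g * g)ᵀ = g * (g⁻¹ * A * g⁻¹ * M) * g := by
    simp only [transpose_mul, hg.eq, Matrix.mul_assoc, nonsing_inv_mul_cancel_left _ _ hdet,
      mul_nonsing_inv_cancel_left _ _ hdet]
  rw [hrw, isSymm_mul_mul_iff hg hdet] at h
  exact (hB.isSymm_mul_iff_commute hM).mp h

end Matrix

theorem stmt_4_general {n : ℕ} (γ₀ g : Matrix (Fin n) (Fin n) ℝ)
    (hg : g.PosDef) (hgsq : g * g = γ₀)
    (t : Fin n → ℝ) (ht : ∀ i j : Fin n, i ≠ j → t i ≠ t j)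
    (T : Matrix (Fin n) (Fin n) ℝ)
    (hT : T = Matrix.of fun i j : Fin n =>
      if (i : ℕ) + 1 = (j : ℕ) ∨ (j : ℕ) + 1 = (i : ℕ) then (1 : ℝ) else 0)
    (Z₁ Z₂ H : Matrix (Fin n) (Fin n) ℝ)
    (hZ₁ : Z₁ = g⁻¹ * Matrix.diagonal t * g⁻¹)
    (hZ₂ : Z₂ = g⁻¹ * T * g⁻¹)
    (hH : H = γ₀)
    (A : Matrix (Fin n) (Fin n) ℝ) (hA : A.IsSymm)
    (h1 : (A * Z₁ * Hᵀ).IsSymm) (h2 : (A * Z₂ * Hᵀ).IsSymm) :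
    ∃ c : ℝ, A = c • γ₀ := by
  classical
  have hgS : g.IsSymm := isHermitian_iff_isSymm.mp hg.isHermitian
  have hdet : IsUnit g.det := (isUnit_iff_isUnit_det g).mp hg.isUnit
  have hT_path : T = (SimpleGraph.pathGraph n).adjMatrix ℝ := by
    ext i j
    simp [hT, SimpleGraph.adjMatrix_apply, SimpleGraph.pathGraph_adj]
  subst hZ₁ hZ₂ hH hgsq hT_path
  obtain ⟨c, hc⟩ := eq_smul_one_of_commute_diagonal_of_commute_adjMatrix
    (SimpleGraph.pathGraph_preconnected n) (fun i j hij => by_contra (ht i j · hij))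
    (commute_conj_of_isSymm_mul_conj hgS hdet hA (isSymm_diagonal t) h1)
    (commute_conj_of_isSymm_mul_conj hgS hdet hA (SimpleGraph.pathGraph n).isSymm_adjMatrix h2)
  refine ⟨c, ?_⟩
  calc A = g * (g⁻¹ * A * g⁻¹) * g := by
        simp only [Matrix.mul_assoc, mul_nonsing_inv_cancel_left _ _ hdet,
          nonsing_inv_mul _ hdet, Matrix.mul_one]
    _ = c • (g * g) := by rw [hc]; simp

theorem stmt_4 {n : ℕ} (hn : 2 ≤ n) (γ₀ g : Matrix (Fin n) (Fin n) ℝ)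
    (hγ₀ : γ₀.PosDef) (hg : g.PosDef) (hgsq : g * g = γ₀)
    (t : Fin n → ℝ) (ht : ∀ i j : Fin n, i ≠ j → t i ≠ t j)
    (T : Matrix (Fin n) (Fin n) ℝ)
    (hT : T = Matrix.of fun i j : Fin n =>
      if (i : ℕ) + 1 = (j : ℕ) ∨ (j : ℕ) + 1 = (i : ℕ) then (1 : ℝ) else 0)
    (Z₁ Z₂ H : Matrix (Fin n) (Fin n) ℝ)
    (hZ₁ : Z₁ = g⁻¹ * Matrix.diagonal t * g⁻¹)
    (hZ₂ : Z₂ = g⁻¹ * T * g⁻¹)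
    (hH : H = γ₀)
    (A : Matrix (Fin n) (Fin n) ℝ) (hA : A.IsSymm)
    (h1 : (A * Z₁ * Hᵀ).IsSymm) (h2 : (A * Z₂ * Hᵀ).IsSymm) :
    ∃ c : ℝ, A = c • γ₀ :=
  stmt_4_general γ₀ g hg hgsq t ht T hT Z₁ Z₂ H hZ₁ hZ₂ hH A hA h1 h2
end

section
/- Let γ : X → GL(n,ℝ) be C¹ with values in symmetric matrices, and let u₁,…,uₙ : X → ℝ be C² functions such that the matrix H with columns Hⱼ = γ∇uⱼ is invertible at each point. Write H^{jl} for the entries of H^{-1} and γ^{pl} for the entries of γ^{-1}. Then for all 1 ≤ l ≤ n and 1 ≤ p < q ≤ n, ∂_q γ^{pl} − ∂_p γ^{ql} = Σ_{i,j} H^{il} (γ^{qj} ∂_p H_{ji} − γ^{pj} ∂_q H_{ji}). -/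
/-!
Since `H = γ ∇u`, the matrix `γ⁻¹ H` is the Jacobian matrix of `u`, so by the symmetry of second
derivatives `∂_q (γ⁻¹ H)_{pi} = ∂_p (γ⁻¹ H)_{qi}`. Expanding both sides with the product rule gives
`Σ_j (∂_q γ^{pj} - ∂_p γ^{qj}) H_{ji} = Σ_j (γ^{qj} ∂_p H_{ji} - γ^{pj} ∂_q H_{ji})` for every `i`,
and multiplying on the right by `H⁻¹` isolates `∂_q γ^{pl} - ∂_p γ^{ql}`.
-/

open Matrix

/-- Partial derivative in the `i`-th coordinate direction. -/
noncomputable def pd {n : ℕ} (i : Fin n) (f : (Fin n → ℝ) → ℝ)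
    (x : Fin n → ℝ) : ℝ :=
  fderiv ℝ f x (Pi.single i 1)

open Filter Topology

section Differentiability

variable {𝕜 E : Type*} [NontriviallyNormedField 𝕜] [NormedAddCommGroup E] [NormedSpace 𝕜 E]
  {m : Type*} [Fintype m] [DecidableEq m] {A : E → Matrix m m 𝕜} {x : E}

theorem Matrix.differentiableAt_det (hA : ∀ i j, DifferentiableAt 𝕜 (fun y => A y i j) x) :
    DifferentiableAt 𝕜 (fun y => (A y).det) x := by
  simp only [Matrix.det_apply']
  exact DifferentiableAt.fun_sum fun σ _ => DifferentiableAt.const_mul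
    (HasFDerivAt.finsetProd fun i _ => (hA (σ i) i).hasFDerivAt).differentiableAt _

theorem Matrix.differentiableAt_inv_apply (hA : ∀ i j, DifferentiableAt 𝕜 (fun y => A y i j) x)
    (hx : IsUnit (A x)) (i j : m) :
    DifferentiableAt 𝕜 (fun y => (A y)⁻¹ i j) x := by
  have hadj : ∀ y, (A y)⁻¹ i j = ((A y).det)⁻¹ * ((A y).updateRow j (Pi.single i 1)).det := by
    intro y
    rw [Matrix.inv_def, Matrix.smul_apply, Matrix.adjugate_apply, Ring.inverse_eq_inv', smul_eq_mul]
  simp only [hadj]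
  refine ((differentiableAt_det hA).inv ((isUnit_iff_isUnit_det _).mp hx).ne_zero).mul
    (differentiableAt_det fun a b => ?_)
  simp only [Matrix.updateRow_apply]
  split
  · exact differentiableAt_const _
  · exact hA a b

end Differentiability

section PartialDerivatives

variable {n : ℕ} {i : Fin n} {f g : (Fin n → ℝ) → ℝ} {x : Fin n → ℝ}

theorem pd_congr_of_eventuallyEq (h : f =ᶠ[𝓝 x] g) : pd i f x = pd i g x := by
  rw [pd, pd, h.fderiv_eq]

theorem pd_fun_sum {ι : Type*} (t : Finset ι) {f : ι → (Fin n → ℝ) → ℝ}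
    (h : ∀ j ∈ t, DifferentiableAt ℝ (f j) x) :
    pd i (fun y => ∑ j ∈ t, f j y) x = ∑ j ∈ t, pd i (f j) x := by
  simp [pd, fderiv_fun_sum h]

theorem pd_fun_mul (hf : DifferentiableAt ℝ f x) (hg : DifferentiableAt ℝ g x) :
    pd i (fun y => f y * g y) x = pd i f x * g x + f x * pd i g x := by
  simp only [pd, fderiv_fun_mul hf hg, _root_.add_apply, _root_.smul_apply, smul_eq_mul]
  ring

theorem ContDiffAt.differentiableAt_pd (hf : ContDiffAt ℝ 2 f x) :
    DifferentiableAt ℝ (pd i f) x :=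
  ((hf.fderiv_right (m := 1) (by norm_num)).differentiableAt one_ne_zero).clm_apply
    (differentiableAt_const _)

theorem ContDiffAt.pd_pd_comm (hf : ContDiffAt ℝ 2 f x) (p q : Fin n) :
    pd q (pd p f) x = pd p (pd q f) x := by
  have hdf : DifferentiableAt ℝ (fderiv ℝ f) x :=
    (hf.fderiv_right (m := 1) (by norm_num)).differentiableAt one_ne_zero
  have hsecond : ∀ v w : Fin n → ℝ,
      fderiv ℝ (fun y => fderiv ℝ f y v) x w = fderiv ℝ (fderiv ℝ f) x w v := by
    intro v w
    simp [fderiv_clm_apply hdf (differentiableAt_const v)]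
  unfold pd
  rw [hsecond, hsecond]
  exact hf.isSymmSndFDerivAt (by simp [minSmoothness_of_isRCLikeNormedField]) _ _

end PartialDerivatives

section Curl

variable {n : ℕ} {m ι : Type*} [Fintype m] {G : (Fin n → ℝ) → Matrix (Fin n) m ℝ}
  {H : (Fin n → ℝ) → Matrix m ι ℝ} {x : Fin n → ℝ}

theorem pd_mul_apply (hG : ∀ r j, DifferentiableAt ℝ (fun y => G y r j) x)
    (hH : ∀ j i, DifferentiableAt ℝ (fun y => H y j i) x) (p r : Fin n) (i : ι) :
    pd p (fun y => (G y * H y) r i) x =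
      ∑ j, (pd p (fun y => G y r j) x * H x j i + G x r j * pd p (fun y => H y j i) x) := by
  simp only [Matrix.mul_apply]
  rw [pd_fun_sum _ fun j _ => (hG r j).fun_mul (hH j i)]
  exact Finset.sum_congr rfl fun j _ => pd_fun_mul (hG r j) (hH j i)

theorem sum_pd_sub_pd_mul_eq_of_mul_eq_pd (hG : ∀ r j, DifferentiableAt ℝ (fun y => G y r j) x)
    (hH : ∀ j i, DifferentiableAt ℝ (fun y => H y j i) x) {u : ι → (Fin n → ℝ) → ℝ}
    (hu : ∀ i, ContDiffAt ℝ 2 (u i) x)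
    (hGH : ∀ᶠ y in 𝓝 x, ∀ r i, (G y * H y) r i = pd r (u i) y) (p q : Fin n) (i : ι) :
    ∑ j, (pd q (fun y => G y p j) x - pd p (fun y => G y q j) x) * H x j i =
      ∑ j, (G x q j * pd p (fun y => H y j i) x - G x p j * pd q (fun y => H y j i) x) := by
  have hpd : ∀ r r', pd r' (fun y => (G y * H y) r i) x = pd r' (pd r (u i)) x := fun r r' =>
    pd_congr_of_eventuallyEq (hGH.mono fun y hy => hy r i)
  have hqp := hpd p q
  have hpq := hpd q p
  rw [pd_mul_apply hG hH, Finset.sum_add_distrib] at hqp hpq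
  have hsymm := (hu i).pd_pd_comm p q
  simp only [sub_mul, Finset.sum_sub_distrib]
  linarith

end Curl

theorem Matrix.eq_sum_inv_mul_of_sum_mul_eq {R m : Type*} [CommRing R] [Fintype m]
    [DecidableEq m] {A : Matrix m m R} (hA : IsUnit A) {a b : m → R}
    (h : ∀ i, ∑ j, a j * A j i = b i) (l : m) :
    a l = ∑ i, A⁻¹ i l * b i := by
  have hab : a ᵥ* A = b := funext h
  have ha : a = b ᵥ* A⁻¹ := by
    rw [← hab, vecMul_vecMul, mul_nonsing_inv _ ((isUnit_iff_isUnit_det _).mp hA), vecMul_one]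
  conv_lhs => rw [ha]
  simp only [vecMul, dotProduct, mul_comm]

theorem stmt_15_general {n : ℕ} (s : Set (Fin n → ℝ)) (hs : IsOpen s)
    (γ : (Fin n → ℝ) → Matrix (Fin n) (Fin n) ℝ)
    (u : Fin n → (Fin n → ℝ) → ℝ)
    (hγ : ∀ i j : Fin n, ContDiffOn ℝ 1 (fun x => γ x i j) s)
    (hγinv : ∀ x ∈ s, IsUnit (γ x))
    (hu : ∀ j, ContDiffOn ℝ 2 (u j) s)
    (H : (Fin n → ℝ) → Matrix (Fin n) (Fin n) ℝ)
    (hH : ∀ x, H x = Matrix.of fun i j : Fin n => ∑ l, γ x i l * pd l (u j) x)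
    (hHinv : ∀ x ∈ s, IsUnit (H x)) :
    ∀ x ∈ s, ∀ l p q : Fin n, p < q →
      pd q (fun y => (γ y)⁻¹ p l) x - pd p (fun y => (γ y)⁻¹ q l) x =
        ∑ i, ∑ j, (H x)⁻¹ i l *
          ((γ x)⁻¹ q j * pd p (fun y => H y j i) x -
            (γ x)⁻¹ p j * pd q (fun y => H y j i) x) := by
  intro x hx l p q _
  have hsx : s ∈ 𝓝 x := hs.mem_nhds hx
  have hγd : ∀ a b, DifferentiableAt ℝ (fun y => γ y a b) x := fun a b =>
    ((hγ a b).contDiffAt hsx).differentiableAt one_ne_zero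
  have hux : ∀ j, ContDiffAt ℝ 2 (u j) x := fun j => (hu j).contDiffAt hsx
  have hHd : ∀ a b, DifferentiableAt ℝ (fun y => H y a b) x := by
    simp only [hH, Matrix.of_apply]
    exact fun a b => DifferentiableAt.fun_sum fun m _ => (hγd a m).mul (hux b).differentiableAt_pd
  have hgrad : ∀ᶠ y in 𝓝 x, ∀ r i, ((γ y)⁻¹ * H y) r i = pd r (u i) y := by
    filter_upwards [hsx] with y hy r i
    have hHγ : H y = γ y * Matrix.of fun l j => pd l (u j) y := by
      ext; simp [hH, Matrix.mul_apply]
    rw [hHγ, nonsing_inv_mul_cancel_left _ _ ((isUnit_iff_isUnit_det _).mp (hγinv y hy)),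
      Matrix.of_apply]
  rw [Matrix.eq_sum_inv_mul_of_sum_mul_eq (hHinv x hx) (sum_pd_sub_pd_mul_eq_of_mul_eq_pd
    (differentiableAt_inv_apply hγd (hγinv x hx)) hHd hux hgrad p q)]
  simp only [Finset.mul_sum]

theorem stmt_15 {n : ℕ} (s : Set (Fin n → ℝ)) (hs : IsOpen s)
    (γ : (Fin n → ℝ) → Matrix (Fin n) (Fin n) ℝ)
    (u : Fin n → (Fin n → ℝ) → ℝ)
    (hγ : ∀ i j : Fin n, ContDiffOn ℝ 1 (fun x => γ x i j) s)
    (hγsymm : ∀ x ∈ s, (γ x).IsSymm)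
    (hγinv : ∀ x ∈ s, IsUnit (γ x))
    (hu : ∀ j, ContDiffOn ℝ 2 (u j) s)
    (H : (Fin n → ℝ) → Matrix (Fin n) (Fin n) ℝ)
    (hH : ∀ x, H x = Matrix.of fun i j : Fin n => ∑ l, γ x i l * pd l (u j) x)
    (hHinv : ∀ x ∈ s, IsUnit (H x)) :
    ∀ x ∈ s, ∀ l p q : Fin n, p < q →
      pd q (fun y => (γ y)⁻¹ p l) x - pd p (fun y => (γ y)⁻¹ q l) x =
        ∑ i, ∑ j, (H x)⁻¹ i l *
          ((γ x)⁻¹ q j * pd p (fun y => H y j i) x -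
            (γ x)⁻¹ p j * pd q (fun y => H y j i) x) :=
  stmt_15_general s hs γ u hγ hγinv hu H hH hHinv
end
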